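/- Let $A : [0,\infty) \to [0,\infty)$ be absolutely continuous with $A \in L^1(0,\infty)$, and suppose $A'(t) \leq C(A(t)^2 + A(t))$ for almost every $t \geq 0$, where $C > 0$. Then $A$ is uniformly bounded on $[0,\infty)$ and $\lim_{t\to+\infty} A(t) = 0$. -/

import Mathlib

/-!
The substitution `u = A / (1 + A)` turns the Riccati-type inequality into `u' = A' / (1 + A)² ≤ C`,
so `u` can increase at most linearly. Since `0 ≤ u ≤ A` is integrable, a value `u t ≥ ε` would force
`u ≥ ε / 2` on a fixed interval ending at `t`, contradicting the decay of the tail integrals; hence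
`u → 0`, so `A = u / (1 - u) → 0`, and a continuous function with a limit at infinity is bounded.
-/

open MeasureTheory Set Filter Topology

theorem sub_le_mul_sub_of_hasDerivAt_of_ae_le {f f' : ℝ → ℝ} {a b C : ℝ} (hab : a ≤ b)
    (hf : ContinuousOn f (Icc a b)) (hf' : ∀ x ∈ Ioo a b, HasDerivAt f (f' x) x)
    (hC : ∀ᵐ x ∂volume.restrict (Icc a b), f' x ≤ C) :
    f b - f a ≤ C * (b - a) := by
  -- `f' ≤ max f' C` everywhere, and `max f' C = C` almost everywhere
  have hφ : (fun x => max (f' x) C) =ᵐ[volume.restrict (Icc a b)] fun _ => C := by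
    filter_upwards [hC] with x hx using max_eq_right hx
  have hint : IntegrableOn (fun x => max (f' x) C) (Icc a b) :=
    (integrableOn_const measure_Icc_lt_top.ne).congr_fun_ae hφ.symm
  have hφ' : ∀ᵐ x, x ∈ uIoc a b → max (f' x) C = C := by
    filter_upwards [(ae_restrict_iff' measurableSet_Icc).1 hφ] with x hx hmem
    exact hx (Ioc_subset_Icc_self (uIoc_of_le hab ▸ hmem))
  calc f b - f a ≤ ∫ x in a..b, max (f' x) C :=
        intervalIntegral.sub_le_integral_of_hasDeriv_right_of_le hab hf
          (fun x hx => (hf' x hx).hasDerivWithinAt) hint (fun _ _ => le_max_left _ _)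
    _ = C * (b - a) := by
        rw [intervalIntegral.integral_congr_ae hφ', intervalIntegral.integral_const,
          smul_eq_mul, mul_comm]

theorem tendsto_zero_of_integrableOn_Ici_of_sub_le {f : ℝ → ℝ} {a C : ℝ} (hC : 0 ≤ C)
    (hf0 : ∀ t, a ≤ t → 0 ≤ f t) (hf : IntegrableOn f (Ici a))
    (hfC : ∀ s t, a ≤ s → s ≤ t → f t - f s ≤ C * (t - s)) :
    Tendsto f atTop (𝓝 0) := by
  refine tendsto_order.2 ⟨fun l hl => ?_, fun ε hε => ?_⟩
  · filter_upwards [eventually_ge_atTop a] with t ht using hl.trans_le (hf0 t ht)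
  obtain ⟨δ, hδ, hCδ⟩ := exists_pos_mul_lt (half_pos hε) C
  have htail : Tendsto (fun t => ∫ x in Ici (t - δ), f x) atTop (𝓝 0) :=
    tendsto_integral_Ici_zero (tendsto_atTop_add_const_right _ (-δ) tendsto_id)
  filter_upwards [htail.eventually_lt_const (mul_pos (half_pos hε) hδ),
    eventually_ge_atTop (a + δ)] with t hsmall ht
  by_contra! hft
  -- `f ≥ ε / 2` on `[t - δ, t]`, so the tail integral from `t - δ` is at least `ε / 2 * δ`
  have hlow : ∀ s ∈ Icc (t - δ) t, ε / 2 ≤ f s := fun s hs => by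
    have := hfC s t (by linarith [hs.1]) hs.2
    have : C * (t - s) ≤ C * δ := by gcongr; linarith [hs.1]
    linarith
  have hsub : Ici (t - δ) ⊆ Ici a := Ici_subset_Ici.2 (by linarith)
  have : ε / 2 * δ ≤ ∫ x in Ici (t - δ), f x :=
    calc ε / 2 * δ = ε / 2 * volume.real (Icc (t - δ) t) := by
          rw [Real.volume_real_Icc_of_le (by linarith)]; ring
      _ ≤ ∫ x in Icc (t - δ) t, f x :=
          setIntegral_ge_of_const_le_real measurableSet_Icc measure_Icc_lt_top.ne hlow
            (hf.mono_set (Icc_subset_Ici_self.trans hsub))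
      _ ≤ ∫ x in Ici (t - δ), f x :=
          setIntegral_mono_set (hf.mono_set hsub)
            ((ae_restrict_iff' measurableSet_Ici).2 (ae_of_all _ fun x hx => hf0 x (hsub hx)))
            Icc_subset_Ici_self.eventuallyLE
  linarith

theorem ContinuousOn.bddAbove_image_Ici_of_tendsto {α : Type*} [LinearOrder α]
    [TopologicalSpace α] [OrderTopology α] [Nonempty α] {f : ℝ → α} {a : ℝ} {l : α}
    (hf : ContinuousOn f (Ici a)) (hl : Tendsto f atTop (𝓝 l)) : BddAbove (f '' Ici a) := by
  obtain ⟨M, hM⟩ := hl.isBoundedUnder_le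
  obtain ⟨T, hT⟩ := eventually_atTop.1 (eventually_map.1 hM)
  have hsplit : Ici a ⊆ Icc a T ∪ Ici T := fun t ht => by
    rcases le_total t T with h | h
    exacts [Or.inl ⟨ht, h⟩, Or.inr h]
  refine BddAbove.mono (image_mono hsplit) ?_
  rw [image_union]
  exact ((isCompact_Icc.bddAbove_image (hf.mono fun t ht => ht.1))).union
    ⟨M, forall_mem_image.2 hT⟩

theorem HasDerivAt.div_one_add {A : ℝ → ℝ} {a' t : ℝ} (hA : HasDerivAt A a' t)
    (h : 1 + A t ≠ 0) : HasDerivAt (fun s => A s / (1 + A s)) (a' / (1 + A t) ^ 2) t := by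
  simpa only [show a' * (1 + A t) - A t * a' = a' by ring] using hA.fun_div (hA.const_add 1) h

theorem div_one_add_sq_le {x d C : ℝ} (hC : 0 ≤ C) (hx : 0 ≤ x) (h : d ≤ C * (x ^ 2 + x)) :
    d / (1 + x) ^ 2 ≤ C := by
  rw [div_le_iff₀ (by positivity)]
  nlinarith

theorem div_one_add_sub_le_of_deriv_le {A : ℝ → ℝ} {a b C : ℝ} (hC : 0 ≤ C) (hab : a ≤ b)
    (hA0 : ∀ t ∈ Icc a b, 0 ≤ A t) (hAd : ∀ t ∈ Icc a b, DifferentiableAt ℝ A t)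
    (hineq : ∀ᵐ t ∂volume.restrict (Icc a b), deriv A t ≤ C * (A t ^ 2 + A t)) :
    A b / (1 + A b) - A a / (1 + A a) ≤ C * (b - a) := by
  have hderiv : ∀ t ∈ Icc a b,
      HasDerivAt (fun s => A s / (1 + A s)) (deriv A t / (1 + A t) ^ 2) t := fun t ht =>
    (hAd t ht).hasDerivAt.div_one_add (by linarith [hA0 t ht])
  refine sub_le_mul_sub_of_hasDerivAt_of_ae_le hab
    (fun t ht => (hderiv t ht).continuousAt.continuousWithinAt)
    (fun t ht => hderiv t (Ioo_subset_Icc_self ht)) ?_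
  filter_upwards [hineq, ae_restrict_mem measurableSet_Icc] with t h ht
  exact div_one_add_sq_le hC (hA0 t ht) h

/-- a nonnegative, integrable (absolutely continuous, here: differentiable)
function on `[0,∞)` whose derivative satisfies `A' ≤ C(A² + A)` a.e. is uniformly
bounded and tends to `0` at infinity. -/
theorem bounded_and_decay_of_integrable_diff_ineq (C : ℝ) (hC : 0 < C) (A : ℝ → ℝ)
    (hAnn : ∀ t, 0 ≤ t → 0 ≤ A t)
    (hAdiff : ∀ t, 0 ≤ t → DifferentiableAt ℝ A t)
    (hAint : IntegrableOn A (Set.Ici 0))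
    (hineq : ∀ᵐ t ∂(volume.restrict (Set.Ici (0:ℝ))),
      deriv A t ≤ C * ((A t)^2 + A t)) :
    (∃ M, ∀ t, 0 ≤ t → A t ≤ M) ∧
      Filter.Tendsto A Filter.atTop (nhds 0) := by
  set u := fun t => A t / (1 + A t)
  have hpos : ∀ t, 0 ≤ t → 1 + A t ≠ 0 := fun t ht => by linarith [hAnn t ht]
  have hAc : ContinuousOn A (Ici 0) := fun t ht => (hAdiff t ht).continuousAt.continuousWithinAt
  have huc : ContinuousOn u (Ici 0) := fun t ht =>
    ((hAdiff t ht).hasDerivAt.div_one_add (hpos t ht)).continuousAt.continuousWithinAt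
  have hu0 : ∀ t, 0 ≤ t → 0 ≤ u t := fun t ht => by have := hAnn t ht; positivity
  have hu_int : IntegrableOn u (Ici 0) := by
    refine hAint.mono' (huc.aestronglyMeasurable measurableSet_Ici) ?_
    filter_upwards [ae_restrict_mem measurableSet_Ici] with t ht
    rw [Real.norm_of_nonneg (hu0 t ht)]
    exact div_le_self (hAnn t ht) (by linarith [hAnn t ht])
  have hu : Tendsto u atTop (𝓝 0) :=
    tendsto_zero_of_integrableOn_Ici_of_sub_le hC.le hu0 hu_int fun s t hs hst =>
      div_one_add_sub_le_of_deriv_le hC.le hst (fun r hr => hAnn r (hs.trans hr.1))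
        (fun r hr => hAdiff r (hs.trans hr.1))
        (ae_restrict_of_ae_restrict_of_subset (Icc_subset_Ici_iff hst |>.2 hs) hineq)
  have hA : Tendsto A atTop (𝓝 0) := by
    have hlim := hu.div (tendsto_const_nhds.sub hu) (by norm_num : (1 : ℝ) - 0 ≠ 0)
    refine (hlim.congr' ?_).trans (by simp)
    filter_upwards [eventually_ge_atTop 0] with t ht
    have := hpos t ht
    simp only [Pi.div_apply, u]
    field_simp
    ring
  obtain ⟨M, hM⟩ := hAc.bddAbove_image_Ici_of_tendsto hA
  exact ⟨⟨M, fun t ht => hM (mem_image_of_mem A ht)⟩, hA⟩
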